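/- (Robust parametrization for polynomials.) Let k ≥ 1. There exists a constant c_2 > 0 depending only on k (one may take c_2 = 2^k) such that for every tuple p = (p_0, p_1, …, p_k) ∈ [0,1]^{k+1} with distinct entries and dispersion h(p) = min_{i≠j} |p_i − p_j| > 0, and for all vectors y, ŷ ∈ ℝ^{k+1}, the Vandermonde matrix V = V(p_0,…,p_k) satisfies ‖V^{-1} y − V^{-1} ŷ‖_1 ≤ c_2 · ‖y − ŷ‖_1 · h(p)^{-k}. -/

import Mathlib

/-!
The inverse of the Vandermonde matrix has the coefficients of the Lagrange basis polynomials
as its columns. The `j`-th Lagrange polynomial is `∏_{m ≠ j} (X - p m) / (p j - p m)`: each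
denominator is at least `h(p)`, and multiplying out the `k` linear factors `X - p m` with
`|p m| ≤ 1` gives coefficients of total absolute value at most `2^k`. Hence every column of
`V⁻¹` has ℓ1 norm at most `2^k h(p)^{-k}`, which bounds the ℓ1 operator norm of `V⁻¹`.
-/

open Matrix Finset

/-- The ℓ1 norm of a vector: the sum of absolute values of its entries. -/
def l1Norm {n : ℕ} (v : Fin n → ℝ) : ℝ := ∑ i, |v i|

/-- The dispersion of a tuple of reals: `h(p) = min_{i ≠ j} |p i - p j|`. -/
noncomputable def dispersion {n : ℕ} (p : Fin n → ℝ) : ℝ :=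
  sInf {d : ℝ | ∃ i j, i ≠ j ∧ d = |p i - p j|}

lemma dispersion_le_abs_sub {n : ℕ} (p : Fin n → ℝ) {i j : Fin n} (h : i ≠ j) :
    dispersion p ≤ |p i - p j| :=
  csInf_le ⟨0, by rintro d ⟨i, j, -, rfl⟩; exact abs_nonneg _⟩ ⟨i, j, h, rfl⟩

lemma l1Norm_mulVec_le {m n : ℕ} (A : Matrix (Fin m) (Fin n) ℝ) {C : ℝ}
    (hA : ∀ j, ∑ i, |A i j| ≤ C) (w : Fin n → ℝ) : l1Norm (A *ᵥ w) ≤ C * l1Norm w :=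
  calc l1Norm (A *ᵥ w) = ∑ i, |∑ j, A i j * w j| := rfl
    _ ≤ ∑ i, ∑ j, |A i j| * |w j| :=
        sum_le_sum fun i _ => (abs_sum_le_sum_abs _ _).trans_eq (by simp only [abs_mul])
    _ = ∑ j, (∑ i, |A i j|) * |w j| := by rw [sum_comm]; simp only [sum_mul]
    _ ≤ ∑ j, C * |w j| := sum_le_sum fun j _ => by gcongr; exact hA j
    _ = C * l1Norm w := (mul_sum ..).symm

namespace Polynomial

lemma sum_range_abs_coeff_X_mul_le (r : ℝ[X]) (n : ℕ) :
    ∑ i ∈ range n, |(X * r).coeff i| ≤ ∑ i ∈ range n, |r.coeff i| := by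
  cases n with
  | zero => simp
  | succ n =>
    rw [sum_range_succ', sum_range_succ]
    simp only [coeff_X_mul, mul_coeff_zero, coeff_X_zero, zero_mul, abs_zero, add_zero]
    exact le_add_of_nonneg_right (abs_nonneg _)

lemma sum_range_abs_coeff_X_sub_C_mul_le (a : ℝ) (r : ℝ[X]) (n : ℕ) :
    ∑ i ∈ range n, |((X - C a) * r).coeff i| ≤ (1 + |a|) * ∑ i ∈ range n, |r.coeff i| :=
  calc ∑ i ∈ range n, |((X - C a) * r).coeff i|
      ≤ ∑ i ∈ range n, (|(X * r).coeff i| + |a| * |r.coeff i|) := by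
        refine sum_le_sum fun i _ => ?_
        rw [sub_mul, coeff_sub, coeff_C_mul, ← abs_mul]
        exact abs_sub _ _
    _ = ∑ i ∈ range n, |(X * r).coeff i| + |a| * ∑ i ∈ range n, |r.coeff i| := by
        rw [sum_add_distrib, mul_sum]
    _ ≤ (1 + |a|) * ∑ i ∈ range n, |r.coeff i| := by
        linarith [sum_range_abs_coeff_X_mul_le r n]

end Polynomial

namespace Lagrange

open Polynomial

lemma sum_range_abs_coeff_nodal_le {ι : Type*} (s : Finset ι) (v : ι → ℝ) (n : ℕ) :
    ∑ i ∈ range n, |(nodal s v).coeff i| ≤ ∏ m ∈ s, (1 + |v m|) := by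
  classical
  induction s using Finset.induction_on with
  | empty =>
    rw [nodal_empty, prod_empty]
    cases n with
    | zero => simp
    | succ n => simp [sum_range_succ', coeff_one]
  | insert a s ha ih =>
    rw [nodal_insert_eq_nodal ha, prod_insert ha]
    exact (sum_range_abs_coeff_X_sub_C_mul_le _ _ n).trans
      (mul_le_mul_of_nonneg_left ih (by positivity))

lemma basis_eq_C_nodalWeight_mul_nodal_erase {F ι : Type*} [Field F] [DecidableEq ι]
    {s : Finset ι} (v : ι → F) {i : ι} (hi : i ∈ s) :
    Lagrange.basis s v i = C (nodalWeight s v i) * nodal (s.erase i) v := by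
  rw [basis_eq_prod_sub_inv_mul_nodal_div hi, nodal_erase_eq_nodal_div hi]

lemma abs_nodalWeight_le {ι : Type*} [DecidableEq ι] {s : Finset ι} {v : ι → ℝ} {i : ι}
    {δ : ℝ} (hδ : 0 < δ) (hv : ∀ m ∈ s.erase i, δ ≤ |v i - v m|) :
    |nodalWeight s v i| ≤ (δ ^ #(s.erase i))⁻¹ := by
  rw [nodalWeight, abs_prod, ← inv_pow, ← prod_const]
  exact prod_le_prod (fun _ _ => abs_nonneg _) fun m hm => by
    rw [abs_inv]; exact inv_anti₀ hδ (hv m hm)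

lemma sum_abs_coeff_basis_le {k : ℕ} {p : Fin (k + 1) → ℝ}
    (hp : ∀ i, p i ∈ Set.Icc (0 : ℝ) 1) (hdisp : 0 < dispersion p) (j : Fin (k + 1)) :
    ∑ i : Fin (k + 1), |(Lagrange.basis univ p j).coeff i| ≤ 2 ^ k / dispersion p ^ k := by
  have hcard : #(univ.erase j) = k := by simp
  have hweight : |nodalWeight univ p j| ≤ (dispersion p ^ k)⁻¹ := by
    refine (abs_nodalWeight_le hdisp fun m hm => ?_).trans_eq (by rw [hcard])
    exact dispersion_le_abs_sub p (mem_erase.mp hm).1.symm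
  have hnodal : ∑ i ∈ range (k + 1), |(nodal (univ.erase j) p).coeff i| ≤ 2 ^ k :=
    calc _ ≤ ∏ m ∈ univ.erase j, (1 + |p m|) := sum_range_abs_coeff_nodal_le _ _ _
      _ ≤ ∏ _m ∈ univ.erase j, (2 : ℝ) := prod_le_prod (fun _ _ => by positivity) fun m _ => by
          rw [abs_of_nonneg (hp m).1]; linarith [(hp m).2]
      _ = 2 ^ k := by rw [prod_const, hcard]
  rw [Fin.sum_univ_eq_sum_range (fun i => |(Lagrange.basis univ p j).coeff i|),
    basis_eq_C_nodalWeight_mul_nodal_erase p (mem_univ j)]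
  simp only [coeff_C_mul, abs_mul, ← mul_sum]
  rw [div_eq_inv_mul]
  exact mul_le_mul hweight hnodal (sum_nonneg fun _ _ => abs_nonneg _) (by positivity)

end Lagrange

open Polynomial in
lemma Matrix.inv_vandermonde {F : Type*} [Field F] {n : ℕ} {v : Fin n → F}
    (hv : Function.Injective v) :
    (vandermonde v)⁻¹ = of fun i j : Fin n => (Lagrange.basis univ v j).coeff i := by
  refine inv_eq_right_inv (ext fun i j => ?_)
  have hdeg : (Lagrange.basis univ v j).natDegree < n := by
    rw [Lagrange.natDegree_basis hv.injOn (mem_univ j), card_univ, Fintype.card_fin]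
    exact Nat.sub_lt i.pos one_pos
  calc (vandermonde v * of fun i j : Fin n => (Lagrange.basis univ v j).coeff i) i j
      = (Lagrange.basis univ v j).eval (v i) := by
        rw [eval_eq_sum_range' hdeg, ← Fin.sum_univ_eq_sum_range
          (fun m => (Lagrange.basis univ v j).coeff m * v i ^ m)]
        simp only [mul_apply, vandermonde_apply, of_apply, mul_comm]
    _ = (1 : Matrix (Fin n) (Fin n) F) i j := by
        rcases eq_or_ne i j with rfl | hij
        · rw [one_apply_eq, Lagrange.eval_basis_self hv.injOn (mem_univ i)]
        · rw [one_apply_ne hij, Lagrange.eval_basis_of_ne hij.symm (mem_univ i)]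

theorem robust_parametrization_polynomials_general (k : ℕ) :
    ∃ c₂ : ℝ, 0 < c₂ ∧
      ∀ p : Fin (k + 1) → ℝ, (∀ i, p i ∈ Set.Icc (0 : ℝ) 1) →
        Function.Injective p → 0 < dispersion p →
        ∀ y y' : Fin (k + 1) → ℝ,
          l1Norm ((Matrix.vandermonde p)⁻¹ *ᵥ y - (Matrix.vandermonde p)⁻¹ *ᵥ y') ≤
            c₂ * l1Norm (y - y') / (dispersion p) ^ k := by
  refine ⟨2 ^ k, by positivity, fun p hp hinj hdisp y y' => ?_⟩
  rw [← mulVec_sub, inv_vandermonde hinj, mul_div_right_comm]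
  exact l1Norm_mulVec_le _ (Lagrange.sum_abs_coeff_basis_le hp hdisp) _

/-- Robust parametrization for polynomials: there is a constant `c₂ > 0`
(depending only on `k`, one may take `c₂ = 2^k`) such that for every tuple
`p ∈ [0,1]^{k+1}` with distinct entries and positive dispersion `h(p)`, and all
vectors `y, y'`, `‖V⁻¹ y − V⁻¹ y'‖₁ ≤ c₂ · ‖y − y'‖₁ · h(p)^{-k}` where
`V = V(p_0, …, p_k)` is the Vandermonde matrix. -/
theorem robust_parametrization_polynomials (k : ℕ) (hk : 1 ≤ k) :
    ∃ c₂ : ℝ, 0 < c₂ ∧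
      ∀ p : Fin (k + 1) → ℝ, (∀ i, p i ∈ Set.Icc (0 : ℝ) 1) →
        Function.Injective p → 0 < dispersion p →
        ∀ y y' : Fin (k + 1) → ℝ,
          l1Norm ((Matrix.vandermonde p)⁻¹ *ᵥ y - (Matrix.vandermonde p)⁻¹ *ᵥ y') ≤
            c₂ * l1Norm (y - y') / (dispersion p) ^ k :=
  robust_parametrization_polynomials_general k
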